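/- Let Π be a partition of ℕ. The commensurator of the Young subgroup 𝔖_Π in the infinite symmetric group 𝔖_ℕ equals the subgroup of all finitary permutations g of ℕ such that g(B) = B (setwise) for every infinite block B of Π. -/

import Mathlib

/-!
If `g⁻¹` sends a point `b` of an infinite block `B` outside `B`, into the block `A`, then the
transpositions `(b x)`, for the infinitely many `x ∈ B` fixed by `g`, lie in `𝔖_Π` but in pairwise
distinct cosets of `𝔖_Π ∩ g𝔖_Πg⁻¹`: the product `(b x)(b y)` sends `b ∈ g(A)` to `y ∉ g(A)`.
Applied to `g` and `g⁻¹`, this shows that commensurating elements fix the infinite blocks.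

Conversely, if `g` fixes every infinite block, each block not fixed by `g` is finite and meets the
finite support of `g`. An element of `𝔖_Π` fixing the `g`-images of these finitely many finite
blocks pointwise lies in `g𝔖_Πg⁻¹`, and this pointwise fixer has finite index in `𝔖_Π`, because
every point it fixes has a finite `𝔖_Π`-orbit.
-/

/-- The finitary symmetric group `𝔖_A` of a set (type) `A`: the subgroup of `Equiv.Perm A`
consisting of bijections moving only finitely many points. -/
def finitaryPerms (α : Type*) : Subgroup (Equiv.Perm α) where
  carrier := {σ | {x | σ x ≠ x}.Finite}
  one_mem' := by simp
  mul_mem' := by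
    intro a b ha hb
    refine Set.Finite.subset (ha.union hb) ?_
    intro x hx
    by_contra hmem
    simp only [Set.mem_union, Set.mem_setOf_eq, not_or, not_not] at hmem
    exact hx (by simp [Equiv.Perm.mul_apply, hmem.2, hmem.1])
  inv_mem' := by
    intro a ha
    refine Set.Finite.subset (ha.image a) ?_
    intro x hx
    refine ⟨a⁻¹ x, ?_, Equiv.apply_symm_apply a x⟩
    simp only [Set.mem_setOf_eq, Equiv.Perm.coe_inv, Equiv.apply_symm_apply]
    exact fun h => hx h.symm


/-- The Young subgroup `𝔖_Π` associated to a partition `Π` of `ℕ`, as a subgroup of the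
infinite symmetric group `𝔖_ℕ` of finitary permutations: all finitary permutations mapping
every block of `Π` onto itself. -/
def youngSubgroup (P : Set (Set ℕ)) : Subgroup (finitaryPerms ℕ) where
  carrier := {σ | ∀ A ∈ P, (σ : Equiv.Perm ℕ) '' A = A}
  one_mem' := by intro A _; simp
  mul_mem' := by
    intro a b ha hb A hA
    have hcomp : ⇑((a : Equiv.Perm ℕ) * (b : Equiv.Perm ℕ)) =
        ⇑(a : Equiv.Perm ℕ) ∘ ⇑(b : Equiv.Perm ℕ) := rfl
    show ⇑(((a * b : finitaryPerms ℕ)) : Equiv.Perm ℕ) '' A = A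
    rw [Subgroup.coe_mul, hcomp, Set.image_comp, hb A hA, ha A hA]
  inv_mem' := by
    intro a ha A hA
    show ⇑((a⁻¹ : finitaryPerms ℕ) : Equiv.Perm ℕ) '' A = A
    rw [Subgroup.coe_inv]
    have := congrArg (Set.image ⇑(a : Equiv.Perm ℕ)⁻¹) (ha A hA)
    rw [← Set.image_comp,
      (by funext x; simp : ⇑(a : Equiv.Perm ℕ)⁻¹ ∘ ⇑(a : Equiv.Perm ℕ) = id), Set.image_id] at this
    exact this.symm

open Pointwise

namespace Subgroup

variable {G : Type*} [Group G]

theorem relIndex_eq_zero_of_pairwise_inv_mul_notMem {H K : Subgroup G} {ι : Type*} [Infinite ι]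
    (f : ι → G) (hfK : ∀ i, f i ∈ K) (hf : Pairwise fun i j => (f i)⁻¹ * f j ∉ H) :
    H.relIndex K = 0 := by
  let coset : ι → K ⧸ H.subgroupOf K := fun i => QuotientGroup.mk ⟨f i, hfK i⟩
  have hcoset : Function.Injective coset := fun i j hij => by
    by_contra hne
    exact hf hne (by simpa [coset, QuotientGroup.eq, mem_subgroupOf] using hij)
  have := Infinite.of_injective coset hcoset
  exact Nat.card_eq_zero_of_infinite

theorem relIndex_stabilizer_ne_zero_of_finite {X : Type*} [MulAction G X] {H : Subgroup G} {x : X}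
    (h : (MulAction.orbit H x).Finite) : (MulAction.stabilizer G x).relIndex H ≠ 0 := by
  have : (MulAction.stabilizer G x).subgroupOf H = MulAction.stabilizer H x := by ext; rfl
  rw [relIndex, this, MulAction.index_stabilizer]
  exact Set.ncard_ne_zero_of_mem (MulAction.mem_orbit_self x) h

theorem Commensurable.mem_commensurator_iff_relIndex_ne_zero (H : Subgroup G) (g : G) :
    g ∈ commensurator H ↔
      (ConjAct.toConjAct g • H).relIndex H ≠ 0 ∧ (ConjAct.toConjAct g⁻¹ • H).relIndex H ≠ 0 := by
  rw [commensurator_mem_iff, Commensurable, ← relIndex_pointwise_smul (ConjAct.toConjAct g)⁻¹ H,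
    inv_smul_smul, ConjAct.toConjAct_inv]

end Subgroup

theorem Equiv.Perm.image_eq_of_mapsTo {α : Type*} {σ : Equiv.Perm α} {s : Set α}
    (h : Set.MapsTo σ s s) (h' : Set.MapsTo ⇑σ⁻¹ s s) : σ '' s = s :=
  h.image_subset.antisymm fun x hx => ⟨σ⁻¹ x, h' hx, σ.apply_symm_apply x⟩

theorem swap_mem_finitaryPerms {α : Type*} [DecidableEq α] (a b : α) :
    Equiv.swap a b ∈ finitaryPerms α :=
  (Set.toFinite {a, b}).subset fun x hx => by
    by_contra h
    simp only [Set.mem_insert_iff, Set.mem_singleton_iff, not_or] at h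
    exact hx (Equiv.swap_apply_of_ne_of_ne h.1 h.2)

theorem Setoid.IsPartition.finite_of_apply_mem {α : Type*} {P : Set (Set α)}
    (hP : Setoid.IsPartition P) {g : Equiv.Perm α} (hg : ∀ B ∈ P, B.Infinite → g '' B = B)
    {A B : Set α} (hA : A ∈ P) (hAfin : A.Finite) (hB : B ∈ P) {x : α} (hx : x ∈ A)
    (hgx : g x ∈ B) : B.Finite := by
  by_contra hBinf
  rw [← hg B hB hBinf, g.injective.mem_set_image] at hgx
  exact hBinf (Setoid.eq_of_mem_eqv_class hP.2 hA hx hB hgx ▸ hAfin)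

section YoungSubgroup

variable {P : Set (Set ℕ)}

theorem mem_youngSubgroup_iff (hP : Setoid.IsPartition P) {σ : finitaryPerms ℕ} :
    σ ∈ youngSubgroup P ↔ ∀ A ∈ P, Set.MapsTo (σ : Equiv.Perm ℕ) A A := by
  refine ⟨fun hσ A hA => Set.mapsTo_iff_image_subset.2 (hσ A hA).subset, fun h A hA => ?_⟩
  refine (h A hA).image_subset.antisymm fun x hx => Set.mem_image_equiv.2 ?_
  obtain ⟨A', ⟨hA', hxA'⟩, -⟩ := hP.2 ((σ : Equiv.Perm ℕ).symm x)
  have hx' : x ∈ A' := by simpa using h A' hA' hxA'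
  rwa [Setoid.eq_of_mem_eqv_class hP.2 hA' hx' hA hx] at hxA'

theorem mem_smul_youngSubgroup_iff (hP : Setoid.IsPartition P) {g σ : finitaryPerms ℕ} :
    σ ∈ ConjAct.toConjAct g • youngSubgroup P ↔
      ∀ A ∈ P, Set.MapsTo (σ : Equiv.Perm ℕ) ((g : Equiv.Perm ℕ) '' A)
        ((g : Equiv.Perm ℕ) '' A) := by
  rw [Subgroup.mem_pointwise_smul_iff_inv_smul_mem, ← ConjAct.toConjAct_inv, ConjAct.smul_def,
    mem_youngSubgroup_iff hP]
  refine forall₂_congr fun A _ => ?_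
  rw [Set.mapsTo_image_iff]
  simp [Set.MapsTo, Set.mem_image_equiv]

theorem swap_mem_youngSubgroup (hP : Setoid.IsPartition P) {A : Set ℕ} (hA : A ∈ P) {a b : ℕ}
    (ha : a ∈ A) (hb : b ∈ A) :
    (⟨Equiv.swap a b, swap_mem_finitaryPerms a b⟩ : finitaryPerms ℕ) ∈ youngSubgroup P := by
  rw [mem_youngSubgroup_iff hP]
  intro C hC x hx
  have hCA {y : ℕ} (hyA : y ∈ A) (hyC : y ∈ C) : C = A :=
    Setoid.eq_of_mem_eqv_class hP.2 hC hyC hA hyA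
  rw [Equiv.swap_apply_def]
  split_ifs with hxa hxb
  · subst hxa; rwa [hCA ha hx]
  · subst hxb; rwa [hCA hb hx]
  · exact hx

theorem orbit_youngSubgroup_subset (hP : Setoid.IsPartition P) {A : Set ℕ} (hA : A ∈ P)
    {x : ℕ} (hx : x ∈ A) : MulAction.orbit (youngSubgroup P) x ⊆ A := by
  rintro _ ⟨σ, rfl⟩
  exact (mem_youngSubgroup_iff hP).1 σ.2 A hA hx

theorem mapsTo_inv_of_relIndex_smul_youngSubgroup_ne_zero (hP : Setoid.IsPartition P)
    {g : finitaryPerms ℕ}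
    (hg : (ConjAct.toConjAct g • youngSubgroup P).relIndex (youngSubgroup P) ≠ 0)
    {B : Set ℕ} (hB : B ∈ P) (hBinf : B.Infinite) : Set.MapsTo ⇑(g : Equiv.Perm ℕ)⁻¹ B B := by
  intro b hb
  by_contra hgb
  obtain ⟨A, ⟨hA, hbA⟩, -⟩ := hP.2 ((g : Equiv.Perm ℕ)⁻¹ b)
  let T := B \ insert b {x | (g : Equiv.Perm ℕ) x ≠ x}
  have : Infinite T := (hBinf.sdiff (g.2.insert b)).to_subtype
  refine hg (Subgroup.relIndex_eq_zero_of_pairwise_inv_mul_notMem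
    (fun x : T => ⟨Equiv.swap b x, swap_mem_finitaryPerms b x⟩)
    (fun x => swap_mem_youngSubgroup hP hB hb x.2.1) ?_)
  intro ⟨x, _, hx⟩ ⟨y, hyB, hy⟩ hxy hmem
  simp only [Set.mem_insert_iff, Set.mem_ofPred_eq, not_or, not_not] at hx hy
  have hyx : y ≠ x := fun h => hxy (Subtype.ext h.symm)
  have hy_mem : y ∈ (g : Equiv.Perm ℕ) '' A := by
    have := (mem_smul_youngSubgroup_iff hP).1 hmem A hA (Set.mem_image_equiv.2 hbA)
    simpa [Equiv.swap_apply_of_ne_of_ne hy.1 hyx] using this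
  rw [Set.mem_image_equiv, (Equiv.symm_apply_eq _).2 hy.2.symm] at hy_mem
  exact hgb (Setoid.eq_of_mem_eqv_class hP.2 hA hy_mem hB hyB ▸ hbA)

theorem relIndex_smul_youngSubgroup_ne_zero (hP : Setoid.IsPartition P) {g : finitaryPerms ℕ}
    (hg : ∀ B ∈ P, B.Infinite → (g : Equiv.Perm ℕ) '' B = B) :
    (ConjAct.toConjAct g • youngSubgroup P).relIndex (youngSubgroup P) ≠ 0 := by
  set E := ⋃ a ∈ {a | (g : Equiv.Perm ℕ) a ≠ a}, ⋃ A ∈ {A ∈ P | a ∈ A ∧ A.Finite}, A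
  have hE : E.Finite := g.2.biUnion fun a _ =>
    (Set.Subsingleton.finite fun A hA A' hA' =>
      Setoid.eq_of_mem_eqv_class hP.2 hA.1 hA.2.1 hA'.1 hA'.2.1).biUnion fun A hA => hA.2.2
  have : Finite ((g : Equiv.Perm ℕ) '' E) := (hE.image _).to_subtype
  let L := ⨅ y : ((g : Equiv.Perm ℕ) '' E), MulAction.stabilizer (finitaryPerms ℕ) (y : ℕ)
  have hL : (L ⊓ youngSubgroup P).relIndex (youngSubgroup P) ≠ 0 := by
    refine Subgroup.relIndex_inf_ne_zero
      (Subgroup.relIndex_iInf_ne_zero fun ⟨_, x, hx, rfl⟩ => ?_) (by simp)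
    simp only [E, Set.mem_iUnion, Set.mem_ofPred_eq] at hx
    obtain ⟨a, -, A, ⟨hA, -, hAfin⟩, hxA⟩ := hx
    obtain ⟨B, ⟨hB, hgxB⟩, -⟩ := hP.2 ((g : Equiv.Perm ℕ) x)
    exact Subgroup.relIndex_stabilizer_ne_zero_of_finite
      ((hP.finite_of_apply_mem hg hA hAfin hB hxA hgxB).subset
        (orbit_youngSubgroup_subset hP hB hgxB))
  refine fun h => hL (Subgroup.relIndex_eq_zero_of_le_left ?_ h)
  rintro σ ⟨hσL, hσH⟩
  rw [mem_smul_youngSubgroup_iff hP]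
  intro A hA
  by_cases hgA : (g : Equiv.Perm ℕ) '' A = A
  · rw [hgA]
    exact (mem_youngSubgroup_iff hP).1 hσH A hA
  have hAfin : A.Finite := by
    by_contra hAinf
    exact hgA (hg A hA hAinf)
  obtain ⟨a, haA, hga⟩ : ∃ a ∈ A, (g : Equiv.Perm ℕ) a ≠ a := by
    by_contra! h
    exact hgA (Set.EqOn.image_eq_self h)
  have hAE : A ⊆ E := fun x hx => by
    simp only [E, Set.mem_iUnion, Set.mem_ofPred_eq]
    exact ⟨a, hga, A, ⟨hA, haA, hAfin⟩, hx⟩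
  intro y hy
  have hσy : (σ : Equiv.Perm ℕ) y = y := Subgroup.mem_iInf.1 hσL ⟨y, Set.image_mono hAE hy⟩
  rwa [hσy]

end YoungSubgroup

/-- The commensurator of a Young subgroup `𝔖_Π` in the infinite symmetric group `𝔖_ℕ` consists
exactly of the finitary permutations that map every infinite block of `Π` onto itself. -/
theorem commensurator_youngSubgroup (P : Set (Set ℕ)) (hP : Setoid.IsPartition P) :
    ∀ g : finitaryPerms ℕ, g ∈ Subgroup.Commensurable.commensurator (youngSubgroup P) ↔
      ∀ B ∈ P, B.Infinite → (g : Equiv.Perm ℕ) '' B = B := by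
  intro g
  rw [Subgroup.Commensurable.mem_commensurator_iff_relIndex_ne_zero]
  constructor
  · rintro ⟨hg, hg'⟩ B hB hBinf
    have hmaps := mapsTo_inv_of_relIndex_smul_youngSubgroup_ne_zero hP hg' hB hBinf
    have hmaps' := mapsTo_inv_of_relIndex_smul_youngSubgroup_ne_zero hP hg hB hBinf
    rw [Subgroup.coe_inv, inv_inv] at hmaps
    exact Equiv.Perm.image_eq_of_mapsTo hmaps hmaps'
  · intro hg
    refine ⟨relIndex_smul_youngSubgroup_ne_zero hP hg,
      relIndex_smul_youngSubgroup_ne_zero hP fun B hB hBinf => ?_⟩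
    rw [Subgroup.coe_inv, Equiv.Perm.coe_inv, ← Equiv.eq_image_iff_symm_image_eq,
      hg B hB hBinf]
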